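/- Let (X,ρ,W) be a hyperbolic space, C ⊆ X a convex subset with the UAFPP for nonexpansive functions, (M,d) a metric space with the AFPP for nonexpansive functions, δ : M → C a nonexpansive selection, and T : (C × M)_∞ → (C × M)_∞ nonexpansive. Assume there exists b > 0 such that ρ(T_u(δ(u)), δ(u)) ≤ b for all u ∈ M, where T_u(x) = P_1(T(x,u)). Then r_H(T) = 0, i.e., inf{d_∞(h,T(h)) : h ∈ (C×M)_∞} = 0. -/

import Mathlib

/-!
For each `u : M` run `N` Krasnoselskii–Mann steps with parameter `1/2` of the fibre map
`T_u = (T (·, u)).1`, starting at `δ u`, and call the result `Φ u`. Axiom (W4) makes `Φ`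
nonexpansive. Since every starting displacement is at most `b`, the UAFPP, combined with the
Goebel–Kirk inequality on a block of iterations where the displacement barely decreases, yields
one `N` for which every `Φ u` is an `ε`-fixed point of `T_u`. Then `u ↦ (T (Φ u, u)).2` is a
nonexpansive self-map of `M`, and an `ε`-fixed point `u` of it, given by the AFPP, makes
`(Φ u, u)` an `ε`-fixed point of `T`.
-/

open Metric Set

/-- Krasnoselski-Mann iteration: x₀ := x, x_{n+1} := W(x_n, T(x_n), λ_n). -/
def KM {X : Type*} (W : X → X → ℝ → X) (T : X → X) (lam : ℕ → ℝ) (x : X) : ℕ → X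
  | 0 => x
  | n + 1 => W (KM W T lam x n) (T (KM W T lam x n)) (lam n)

/-- M has the approximate fixed point property for nonexpansive mappings. -/
def AFPP (M : Type*) [MetricSpace M] : Prop :=
  ∀ S : M → M, (∀ u v : M, dist (S u) (S v) ≤ dist u v) →
    sInf {r : ℝ | ∃ u : M, r = dist u (S u)} = 0

/-- C has the uniform approximate fixed point property for nonexpansive self-maps. -/
def UAFPP {X : Type*} [MetricSpace X] (C : Set X) : Prop :=
  ∀ ε > (0:ℝ), ∀ b > (0:ℝ), ∃ D > (0:ℝ), ∀ x ∈ C, ∀ S : X → X,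
    (∀ y ∈ C, S y ∈ C) → (∀ y ∈ C, ∀ z ∈ C, dist (S y) (S z) ≤ dist y z) →
    dist x (S x) ≤ b →
    ∃ xstar ∈ C, dist x xstar ≤ D ∧ dist xstar (S xstar) ≤ ε

theorem sInf_eq_zero_of_nonneg_of_forall_exists_le {A : Set ℝ} (h0 : ∀ a ∈ A, 0 ≤ a)
    (h : ∀ ε > 0, ∃ a ∈ A, a ≤ ε) : sInf A = 0 := by
  refine le_antisymm (le_of_forall_pos_le_add fun ε hε => ?_) (Real.sInf_nonneg h0)
  obtain ⟨a, ha, haε⟩ := h ε hε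
  rw [zero_add]
  exact (csInf_le ⟨0, h0⟩ ha).trans haε

theorem exists_lt_sub_succ_le_of_lt_mul {a : ℕ → ℝ} {R : ℕ} {γ : ℝ} (hR : 0 ≤ a R)
    (h0 : a 0 < R * γ) : ∃ t < R, a t - a (t + 1) ≤ γ := by
  have hR0 : R ≠ 0 := by
    rintro rfl
    simp only [CharP.cast_eq_zero, zero_mul] at h0
    linarith
  by_contra! h
  have : R * γ < a 0 - a R := calc
    R * γ = ∑ _t ∈ Finset.range R, γ := by simp
    _ < ∑ t ∈ Finset.range R, (a t - a (t + 1)) :=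
      Finset.sum_lt_sum_of_nonempty (Finset.nonempty_range_iff.2 hR0)
        fun t ht => h t (Finset.mem_range.1 ht)
    _ = a 0 - a R := Finset.sum_range_sub' a R
  linarith

theorem AFPP.exists_dist_lt {M : Type*} [MetricSpace M] [Nonempty M] (hM : AFPP M) {S : M → M}
    (hS : ∀ u v : M, dist (S u) (S v) ≤ dist u v) {ε : ℝ} (hε : 0 < ε) :
    ∃ u, dist u (S u) < ε := by
  have hne : {r : ℝ | ∃ u, r = dist u (S u)}.Nonempty := ⟨_, Classical.arbitrary M, rfl⟩
  obtain ⟨_, ⟨u, rfl⟩, hu⟩ := exists_lt_of_csInf_lt hne ((hM S hS).trans_lt hε)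
  exact ⟨u, hu⟩

theorem one_half_mem_Icc : (1 / 2 : ℝ) ∈ Icc (0:ℝ) 1 := ⟨by norm_num, by norm_num⟩

theorem KM_mem {X : Type*} {W : X → X → ℝ → X} {C : Set X}
    (hconv : ∀ x ∈ C, ∀ y ∈ C, ∀ l ∈ Icc (0:ℝ) 1, W x y l ∈ C) {S : X → X}
    (hS : ∀ y ∈ C, S y ∈ C) {lam : ℕ → ℝ} (hlam : ∀ n, lam n ∈ Icc (0:ℝ) 1) {x : X}
    (hx : x ∈ C) : ∀ n, KM W S lam x n ∈ C
  | 0 => hx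
  | n + 1 => hconv _ (KM_mem hconv hS hlam hx n) _ (hS _ (KM_mem hconv hS hlam hx n)) _ (hlam n)

def IsKMOrbit {X : Type*} (W : X → X → ℝ → X) (S : X → X) (l : ℝ) (x : ℕ → X) : Prop :=
  ∀ k, x (k + 1) = W (x k) (S (x k)) l

theorem isKMOrbit_KM {X : Type*} {W : X → X → ℝ → X} (S : X → X) (l : ℝ) (x₀ : X) :
    IsKMOrbit W S l (KM W S (fun _ => l) x₀) :=
  fun _ => rfl

section Hyperbolic

variable {X : Type*} [MetricSpace X] {W : X → X → ℝ → X} {C : Set X}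

theorem dist_left_W_le
    (hW1 : ∀ x y z : X, ∀ l ∈ Icc (0:ℝ) 1,
      dist z (W x y l) ≤ (1 - l) * dist z x + l * dist z y)
    {l : ℝ} (hl : l ∈ Icc (0:ℝ) 1) (x y : X) : dist x (W x y l) ≤ l * dist x y := by
  simpa using hW1 x y x l hl

theorem dist_W_right_le
    (hW1 : ∀ x y z : X, ∀ l ∈ Icc (0:ℝ) 1,
      dist z (W x y l) ≤ (1 - l) * dist z x + l * dist z y)
    {l : ℝ} (hl : l ∈ Icc (0:ℝ) 1) (x y : X) : dist (W x y l) y ≤ (1 - l) * dist x y := by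
  simpa [dist_comm] using hW1 x y y l hl

theorem dist_KM_le
    (hW4 : ∀ x y z w : X, ∀ l ∈ Icc (0:ℝ) 1,
      dist (W x z l) (W y w l) ≤ (1 - l) * dist x y + l * dist z w)
    (hconv : ∀ x ∈ C, ∀ y ∈ C, ∀ l ∈ Icc (0:ℝ) 1, W x y l ∈ C) {S S' : X → X}
    (hS : ∀ y ∈ C, S y ∈ C) (hS' : ∀ y ∈ C, S' y ∈ C) {c : ℝ}
    (hSS' : ∀ y ∈ C, ∀ z ∈ C, dist y z ≤ c → dist (S y) (S' z) ≤ c)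
    {lam : ℕ → ℝ} (hlam : ∀ n, lam n ∈ Icc (0:ℝ) 1) {x y : X} (hx : x ∈ C) (hy : y ∈ C)
    (hxy : dist x y ≤ c) (n : ℕ) : dist (KM W S lam x n) (KM W S' lam y n) ≤ c := by
  induction n with
  | zero => exact hxy
  | succ n ih =>
    have hSn := hSS' _ (KM_mem hconv hS hlam hx n) _ (KM_mem hconv hS' hlam hy n) ih
    obtain ⟨hl0, hl1⟩ := hlam n
    calc dist (KM W S lam x (n + 1)) (KM W S' lam y (n + 1))
        ≤ (1 - lam n) * dist (KM W S lam x n) (KM W S' lam y n)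
          + lam n * dist (S (KM W S lam x n)) (S' (KM W S' lam y n)) := hW4 _ _ _ _ _ (hlam n)
      _ ≤ (1 - lam n) * c + lam n * c := by gcongr
      _ = c := by ring

namespace IsKMOrbit

variable {S : X → X} {l : ℝ} {x : ℕ → X}

theorem dist_succ_le (hx : IsKMOrbit W S l x)
    (hW1 : ∀ x y z : X, ∀ l ∈ Icc (0:ℝ) 1,
      dist z (W x y l) ≤ (1 - l) * dist z x + l * dist z y)
    (hl : l ∈ Icc (0:ℝ) 1) (k : ℕ) : dist (x k) (x (k + 1)) ≤ l * dist (x k) (S (x k)) := by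
  rw [hx k]
  exact dist_left_W_le hW1 hl _ _

theorem antitone_dist (hx : IsKMOrbit W S l x)
    (hW1 : ∀ x y z : X, ∀ l ∈ Icc (0:ℝ) 1,
      dist z (W x y l) ≤ (1 - l) * dist z x + l * dist z y)
    (hl : l ∈ Icc (0:ℝ) 1) (hS : ∀ y ∈ C, ∀ z ∈ C, dist (S y) (S z) ≤ dist y z)
    (hxC : ∀ k, x k ∈ C) : Antitone fun k => dist (x k) (S (x k)) := by
  refine antitone_nat_of_succ_le fun k => ?_
  have hright : dist (x (k + 1)) (S (x k)) ≤ (1 - l) * dist (x k) (S (x k)) := by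
    rw [hx k]
    exact dist_W_right_le hW1 hl _ _
  calc dist (x (k + 1)) (S (x (k + 1)))
      ≤ dist (x (k + 1)) (S (x k)) + dist (S (x k)) (S (x (k + 1))) := dist_triangle _ _ _
    _ ≤ (1 - l) * dist (x k) (S (x k)) + dist (x k) (x (k + 1)) :=
      add_le_add hright (hS _ (hxC k) _ (hxC (k + 1)))
    _ ≤ (1 - l) * dist (x k) (S (x k)) + l * dist (x k) (S (x k)) := by
      gcongr
      exact hx.dist_succ_le hW1 hl k
    _ = dist (x k) (S (x k)) := by ring

theorem dist_add_le (hx : IsKMOrbit W S l x)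
    (hW1 : ∀ x y z : X, ∀ l ∈ Icc (0:ℝ) 1,
      dist z (W x y l) ≤ (1 - l) * dist z x + l * dist z y)
    (hl : l ∈ Icc (0:ℝ) 1) (hS : ∀ y ∈ C, ∀ z ∈ C, dist (S y) (S z) ≤ dist y z)
    (hxC : ∀ k, x k ∈ C) (i k : ℕ) :
    dist (x i) (x (i + k)) ≤ k * l * dist (x i) (S (x i)) := by
  induction k with
  | zero => simp
  | succ k ih =>
    have hstep := hx.dist_succ_le hW1 hl (i + k)
    have hanti := mul_le_mul_of_nonneg_left
      (hx.antitone_dist hW1 hl hS hxC (Nat.le_add_right i k)) hl.1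
    calc dist (x i) (x (i + (k + 1)))
        ≤ dist (x i) (x (i + k)) + dist (x (i + k)) (x (i + k + 1)) := dist_triangle _ _ _
      _ ≤ (k + 1 : ℕ) * l * dist (x i) (S (x i)) := by push_cast; linarith

theorem dist_add_le_of_mem (hx : IsKMOrbit W S l x)
    (hW1 : ∀ x y z : X, ∀ l ∈ Icc (0:ℝ) 1,
      dist z (W x y l) ≤ (1 - l) * dist z x + l * dist z y)
    (hl : l ∈ Icc (0:ℝ) 1) (hS : ∀ y ∈ C, ∀ z ∈ C, dist (S y) (S z) ≤ dist y z)
    (hxC : ∀ k, x k ∈ C) {p : X} (hp : p ∈ C) (i k : ℕ) :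
    dist p (x (i + k)) ≤ dist p (x i) + k * l * dist p (S p) := by
  induction k with
  | zero => simp
  | succ k ih =>
    have hW := hW1 (x (i + k)) (S (x (i + k))) p l hl
    rw [← hx (i + k)] at hW
    have hSp : dist p (S (x (i + k))) ≤ dist p (S p) + dist p (x (i + k)) :=
      (dist_triangle _ _ _).trans (by gcongr; exact hS p hp _ (hxC (i + k)))
    have := mul_le_mul_of_nonneg_left hSp hl.1
    rw [← add_assoc]
    push_cast
    linarith

theorem goebel_kirk (hx : IsKMOrbit W S (1 / 2) x)
    (hW1 : ∀ x y z : X, ∀ l ∈ Icc (0:ℝ) 1,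
      dist z (W x y l) ≤ (1 - l) * dist z x + l * dist z y)
    (hS : ∀ y ∈ C, ∀ z ∈ C, dist (S y) (S z) ≤ dist y z) (hxC : ∀ k, x k ∈ C) (k i : ℕ) :
    (1 + k / 2) * dist (x i) (S (x i))
      - 2 ^ k * (dist (x i) (S (x i)) - dist (x (i + k)) (S (x (i + k))))
      ≤ dist (x i) (S (x (i + k))) := by
  induction k generalizing i with
  | zero => simp
  | succ k ih =>
    have hidx : i + (k + 1) = i + 1 + k := by ring
    have hpath := hx.dist_add_le hW1 one_half_mem_Icc hS hxC i (k + 1)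
    rw [hidx] at hpath ⊢
    have hW := hW1 (x i) (S (x i)) (S (x (i + 1 + k))) (1 / 2) one_half_mem_Icc
    rw [← hx i, dist_comm _ (x (i + 1)), dist_comm _ (x i), dist_comm _ (S (x i))] at hW
    have hSz := hS _ (hxC i) _ (hxC (i + 1 + k))
    have hIH := ih (i + 1)
    have hmono := hx.antitone_dist hW1 one_half_mem_Icc hS hxC (Nat.le_succ i)
    have hpow : (k : ℝ) + 2 ≤ 2 ^ (k + 1) := by exact_mod_cast Nat.lt_two_pow_self (n := k + 1)
    -- the induction step loses exactly `(2 ^ (k + 1) - (k + 2)) * (dᵢ - dᵢ₊₁) ≥ 0`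
    have hloss : 0 ≤ (2 ^ (k + 1) - ((k : ℝ) + 2))
        * (dist (x i) (S (x i)) - dist (x (i + 1)) (S (x (i + 1)))) :=
      mul_nonneg (by linarith) (by simpa using hmono)
    simp only [Nat.cast_add, Nat.cast_one, pow_succ] at hpath hloss ⊢
    linarith

theorem goebel_kirk_of_mem (hx : IsKMOrbit W S (1 / 2) x)
    (hW1 : ∀ x y z : X, ∀ l ∈ Icc (0:ℝ) 1,
      dist z (W x y l) ≤ (1 - l) * dist z x + l * dist z y)
    (hS : ∀ y ∈ C, ∀ z ∈ C, dist (S y) (S z) ≤ dist y z) (hxC : ∀ k, x k ∈ C) {p : X}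
    (hp : p ∈ C) (i n : ℕ) :
    (1 + n / 2) * dist (x i) (S (x i))
      ≤ 2 ^ n * (dist (x i) (S (x i)) - dist (x (i + n)) (S (x (i + n))))
        + 2 * dist (x i) p + (1 + n / 2) * dist p (S p) := by
  have hGK := hx.goebel_kirk hW1 hS hxC n i
  have hp' := hx.dist_add_le_of_mem hW1 one_half_mem_Icc hS hxC hp i n
  have h1 := dist_triangle4 (x i) p (S p) (S (x (i + n)))
  have h2 := hS p hp _ (hxC (i + n))
  rw [dist_comm p (x i)] at hp'
  linarith

end IsKMOrbit

theorem UAFPP.exists_dist_KM_le (hCU : UAFPP C)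
    (hW1 : ∀ x y z : X, ∀ l ∈ Icc (0:ℝ) 1,
      dist z (W x y l) ≤ (1 - l) * dist z x + l * dist z y)
    (hconv : ∀ x ∈ C, ∀ y ∈ C, ∀ l ∈ Icc (0:ℝ) 1, W x y l ∈ C) {b : ℝ} (hb : 0 < b)
    {ε : ℝ} (hε : 0 < ε) :
    ∃ N : ℕ, ∀ S : X → X, (∀ y ∈ C, S y ∈ C) →
      (∀ y ∈ C, ∀ z ∈ C, dist (S y) (S z) ≤ dist y z) → ∀ x₀ ∈ C, dist x₀ (S x₀) ≤ b →
      dist (KM W S (fun _ => 1 / 2) x₀ N) (S (KM W S (fun _ => 1 / 2) x₀ N)) ≤ ε := by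
  obtain ⟨D, -, hD⟩ := hCU (ε / 4) (by positivity) b hb
  obtain ⟨n, hn⟩ := exists_nat_ge (6 * D / ε)
  set γ := ε / 4 / 2 ^ n with hγ
  obtain ⟨R, hR⟩ := exists_nat_gt (b / γ)
  refine ⟨R * n, fun S hSC hS x₀ hx₀ hb₀ => ?_⟩
  set x := KM W S (fun _ => 1 / 2) x₀
  have hx : IsKMOrbit W S (1 / 2) x := isKMOrbit_KM S _ x₀
  have hxC : ∀ k, x k ∈ C := KM_mem hconv hSC (fun _ => one_half_mem_Icc) hx₀
  have hanti := hx.antitone_dist hW1 one_half_mem_Icc hS hxC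
  -- on one of the `R` blocks of length `n` the displacement drops by at most `γ`; there the
  -- Goebel–Kirk inequality and the approximate fixed point given by the UAFPP force it below `ε`
  have hbR : dist (x 0) (S (x 0)) < R * γ := hb₀.trans_lt ((div_lt_iff₀ (by positivity)).1 hR)
  obtain ⟨t, htR, hdrop⟩ := exists_lt_sub_succ_le_of_lt_mul
    (a := fun t => dist (x (t * n)) (S (x (t * n)))) dist_nonneg (by simpa using hbR)
  simp only [add_mul, one_mul] at hdrop
  obtain ⟨p, hpC, hpD, hpε⟩ := hD (x (t * n)) (hxC _) S hSC hS ((hanti (Nat.zero_le _)).trans hb₀)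
  have hGK := hx.goebel_kirk_of_mem hW1 hS hxC hpC (t * n) n
  have hsmall : dist (x (t * n)) (S (x (t * n))) ≤ ε := by
    have h2n : 2 ^ n * γ = ε / 4 := by rw [hγ]; field_simp
    have hdropn := mul_le_mul_of_nonneg_left hdrop (by positivity : (0:ℝ) ≤ 2 ^ n)
    have hpεn := mul_le_mul_of_nonneg_left hpε (by positivity : (0:ℝ) ≤ 1 + n / 2)
    have h6D : 6 * D ≤ n * ε := (div_le_iff₀ hε).1 hn
    have hnε : 0 ≤ (n : ℝ) * ε := by positivity
    refine le_of_mul_le_mul_left ?_ (by positivity : (0:ℝ) < 1 + n / 2)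
    linarith
  exact (hanti (Nat.mul_le_mul_right n htR.le)).trans hsmall

end Hyperbolic

section Product

variable {X M : Type*} [MetricSpace X] [MetricSpace M] {C : Set X} {T : X × M → X × M}

theorem dist_fst_apply_le
    (hT : ∀ p q : X × M, p.1 ∈ C → q.1 ∈ C → dist (T p) (T q) ≤ dist p q)
    {y z : X} (hy : y ∈ C) (hz : z ∈ C) (u v : M) :
    dist (T (y, u)).1 (T (z, v)).1 ≤ max (dist y z) (dist u v) := by
  have := hT (y, u) (z, v) hy hz
  rw [Prod.dist_eq, Prod.dist_eq] at this
  exact (le_max_left _ _).trans this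

theorem dist_snd_apply_le
    (hT : ∀ p q : X × M, p.1 ∈ C → q.1 ∈ C → dist (T p) (T q) ≤ dist p q)
    {y z : X} (hy : y ∈ C) (hz : z ∈ C) (u v : M) :
    dist (T (y, u)).2 (T (z, v)).2 ≤ max (dist y z) (dist u v) := by
  have := hT (y, u) (z, v) hy hz
  rw [Prod.dist_eq, Prod.dist_eq] at this
  exact (le_max_right _ _).trans this

end Product

theorem rH_eq_zero_of_UAFPP_general {X M : Type*} [MetricSpace X] [MetricSpace M] [Nonempty M]
    (W : X → X → ℝ → X)
    (hW1 : ∀ x y z : X, ∀ l ∈ Set.Icc (0:ℝ) 1,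
      dist z (W x y l) ≤ (1 - l) * dist z x + l * dist z y)
    (hW4 : ∀ x y z w : X, ∀ l ∈ Set.Icc (0:ℝ) 1,
      dist (W x z l) (W y w l) ≤ (1 - l) * dist x y + l * dist z w)
    (C : Set X)
    (hconv : ∀ x ∈ C, ∀ y ∈ C, ∀ l ∈ Set.Icc (0:ℝ) 1, W x y l ∈ C)
    (hCU : UAFPP C) (hM : AFPP M)
    (δ : M → X) (hδC : ∀ u, δ u ∈ C)
    (hδne : ∀ u v : M, dist (δ u) (δ v) ≤ dist u v)
    (T : X × M → X × M)
    (hT1 : ∀ x ∈ C, ∀ u : M, (T (x, u)).1 ∈ C)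
    (hTne : ∀ p q : X × M, p.1 ∈ C → q.1 ∈ C → dist (T p) (T q) ≤ dist p q)
    (b : ℝ) (hb : 0 < b)
    (hTδ : ∀ u : M, dist (T (δ u, u)).1 (δ u) ≤ b) :
    sInf {r : ℝ | ∃ x ∈ C, ∃ u : M, r = dist (x, u) (T (x, u))} = 0 := by
  refine sInf_eq_zero_of_nonneg_of_forall_exists_le (by rintro _ ⟨x, -, u, rfl⟩; exact dist_nonneg)
    fun ε hε => ?_
  have hTC : ∀ u, ∀ y ∈ C, (T (y, u)).1 ∈ C := fun u y hy => hT1 y hy u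
  obtain ⟨N, hN⟩ := hCU.exists_dist_KM_le hW1 hconv hb hε
  let Φ : M → X := fun u => KM W (fun y => (T (y, u)).1) (fun _ => 1 / 2) (δ u) N
  have hΦC : ∀ u, Φ u ∈ C := fun u => KM_mem hconv (hTC u) (fun _ => one_half_mem_Icc) (hδC u) N
  have hΦfix : ∀ u, dist (Φ u) (T (Φ u, u)).1 ≤ ε := fun u =>
    hN _ (hTC u) (fun y hy z hz => (dist_fst_apply_le hTne hy hz u u).trans (by simp))
      (δ u) (hδC u) (dist_comm (δ u) _ ▸ hTδ u)
  have hΦ : ∀ u v, dist (Φ u) (Φ v) ≤ dist u v := fun u v =>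
    dist_KM_le hW4 hconv (hTC u) (hTC v)
      (fun y hy z hz hyz => (dist_fst_apply_le hTne hy hz u v).trans (max_le hyz le_rfl))
      (fun _ => one_half_mem_Icc) (hδC u) (hδC v) (hδne u v) N
  obtain ⟨u, hu⟩ := hM.exists_dist_lt (S := fun u => (T (Φ u, u)).2)
    (fun u v => (dist_snd_apply_le hTne (hΦC u) (hΦC v) u v).trans (max_le (hΦ u v) le_rfl)) hε
  exact ⟨_, ⟨Φ u, hΦC u, u, rfl⟩, Prod.dist_eq.trans_le (max_le (hΦfix u) hu.le)⟩

/-- If C has the UAFPP, M has the AFPP, and ρ(T_u(δ(u)), δ(u)) ≤ b uniformly,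
then r_H(T) = 0. -/
theorem rH_eq_zero_of_UAFPP {X M : Type*} [MetricSpace X] [MetricSpace M] [Nonempty M]
    (W : X → X → ℝ → X)
    (hW1 : ∀ x y z : X, ∀ l ∈ Set.Icc (0:ℝ) 1,
      dist z (W x y l) ≤ (1 - l) * dist z x + l * dist z y)
    (hW2 : ∀ x y : X, ∀ l ∈ Set.Icc (0:ℝ) 1, ∀ l' ∈ Set.Icc (0:ℝ) 1,
      dist (W x y l) (W x y l') = |l - l'| * dist x y)
    (hW3 : ∀ x y : X, ∀ l ∈ Set.Icc (0:ℝ) 1, W x y l = W y x (1 - l))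
    (hW4 : ∀ x y z w : X, ∀ l ∈ Set.Icc (0:ℝ) 1,
      dist (W x z l) (W y w l) ≤ (1 - l) * dist x y + l * dist z w)
    (C : Set X) (hC : C.Nonempty)
    (hconv : ∀ x ∈ C, ∀ y ∈ C, ∀ l ∈ Set.Icc (0:ℝ) 1, W x y l ∈ C)
    (hCU : UAFPP C) (hM : AFPP M)
    (δ : M → X) (hδC : ∀ u, δ u ∈ C)
    (hδne : ∀ u v : M, dist (δ u) (δ v) ≤ dist u v)
    (T : X × M → X × M)
    (hT1 : ∀ x ∈ C, ∀ u : M, (T (x, u)).1 ∈ C)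
    (hTne : ∀ p q : X × M, p.1 ∈ C → q.1 ∈ C → dist (T p) (T q) ≤ dist p q)
    (b : ℝ) (hb : 0 < b)
    (hTδ : ∀ u : M, dist (T (δ u, u)).1 (δ u) ≤ b) :
    sInf {r : ℝ | ∃ x ∈ C, ∃ u : M, r = dist (x, u) (T (x, u))} = 0 :=
  rH_eq_zero_of_UAFPP_general W hW1 hW4 C hconv hCU hM δ hδC hδne T hT1 hTne b hb hTδ
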